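/- arXiv:2102.02269 — 2 statements merged into one kernel-verified Lean document; each statement's English description precedes it below -/
import Mathlib

section
/- Let (a_n)_{n≥0} be a real sequence with Σ_{n=0}^{∞} |a_n| < ∞, and let f : [−1,1] → ℝ satisfy f(x) = a_0/2 + Σ_{n=1}^{∞} a_n T_n(x) for all x ∈ [−1,1]. For N ≥ 1, let C_N be the unique polynomial of degree at most N with C_N(x_k) = f(x_k) at the Gauss–Lobatto nodes x_k = −cos(kπ/N), k = 0,…,N. Then the interpolation error is at most twice the tail of the coefficient series: sup_{x∈[−1,1]} |f(x) − C_N(x)| ≤ 2 Σ_{n=N}^{∞} |a_n|. -/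
/-!
At the Gauss–Lobatto nodes `cos (iπ/N)` we have `T_n = cos (n iπ/N)`, which only depends on `n`
modulo `2N` and up to sign, so `T_n` coincides there with `T_m` for an index `m ≤ N` (aliasing).
Replacing every `T_n` in the Chebyshev series of `f` by its alias gives an absolutely convergent
series of polynomials of degree `≤ N`, hence a polynomial of degree `≤ N`, which agrees with `f`
at the `N + 1` nodes and is therefore the interpolant `C`. Thus `f - C = Σ aₙ (Tₙ - T_{alias n})`,
where the terms with `n ≤ N` vanish and the others are bounded by `2 |aₙ|`.
-/

open Polynomial Chebyshev

namespace Polynomial.Chebyshev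

open Real

/-- The index `m ∈ [0, N]` with `m ≡ ± n [MOD 2 * N]`. -/
def aliasIndex (N n : ℕ) : ℕ :=
  if n % (2 * N) ≤ N then n % (2 * N) else 2 * N - n % (2 * N)

lemma aliasIndex_le (N n : ℕ) : aliasIndex N n ≤ N := by
  unfold aliasIndex
  split_ifs <;> omega

lemma aliasIndex_of_le {N n : ℕ} (h : n ≤ N) : aliasIndex N n = n := by
  rcases Nat.eq_zero_or_pos N with rfl | hN
  · simp [aliasIndex, Nat.le_zero.mp h]
  · simp [aliasIndex, Nat.mod_eq_of_lt (by omega : n < 2 * N), h]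

lemma eval_T_node_aliasIndex (N n i : ℕ) :
    (T ℝ (aliasIndex N n)).eval (node N i) = (T ℝ n).eval (node N i) := by
  rcases eq_or_ne N 0 with rfl | hN
  · simp [node]
  simp only [node, T_real_cos, Int.cast_natCast]
  set x := (i : ℝ) * π / N
  have hperiod : ∀ m q : ℕ, cos ((m + 2 * N * q : ℕ) * x) = cos (m * x) := fun m q => by
    rw [← cos_add_nat_mul_two_pi (m * x) (q * i)]
    congr 1
    simp only [x]
    push_cast
    field_simp
  have hreflect : ∀ m ≤ 2 * N, cos ((2 * N - m : ℕ) * x) = cos (m * x) := fun m hm => by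
    rw [← cos_nat_mul_two_pi_sub (m * x) i]
    congr 1
    simp only [x]
    push_cast [hm]
    field_simp
  have hmod : cos (n * x) = cos ((n % (2 * N) : ℕ) * x) := by
    rw [← hperiod (n % (2 * N)) (n / (2 * N)), Nat.mod_add_div]
  rw [hmod, aliasIndex]
  split_ifs
  · rfl
  · exact hreflect _ (Nat.mod_lt _ (by omega)).le

lemma neg_node_sub {N i : ℕ} (hN : N ≠ 0) (hi : i ≤ N) : -node N (N - i) = node N i := by
  rw [node, node, ← cos_pi_sub, Nat.cast_sub hi]
  congr 1
  field_simp
  ring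

lemma abs_eval_T_sub_eval_T_le_two {x : ℝ} (hx : |x| ≤ 1) (m n : ℤ) :
    |(T ℝ m).eval x - (T ℝ n).eval x| ≤ 2 := by
  linarith [abs_sub ((T ℝ m).eval x) ((T ℝ n).eval x), abs_eval_T_real_le_one m hx,
    abs_eval_T_real_le_one n hx]

theorem eq_of_natDegree_le_of_eval_node_eq {N : ℕ} {P Q : ℝ[X]} (hP : P.natDegree ≤ N)
    (hQ : Q.natDegree ≤ N) (h : ∀ i ≤ N, P.eval (node N i) = Q.eval (node N i)) : P = Q := by
  refine eq_of_degree_sub_lt_of_eval_index_eq _ (strictAntiOn_node N).injOn ?_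
    fun i hi => h i (Finset.mem_range_succ_iff.mp hi)
  rw [Finset.card_range]
  exact (degree_le_of_natDegree_le ((natDegree_sub_le P Q).trans (max_le hP hQ))).trans_lt
    (by exact_mod_cast Nat.lt_succ_self N)

end Polynomial.Chebyshev

theorem exists_natDegree_le_hasSum_mul_eval {ι : Type*} {b : ι → ℝ} (hb : Summable b) {N : ℕ}
    {G : ι → ℕ} (hG : ∀ n, G n ≤ N) (p : ℕ → ℝ[X]) (hp : ∀ m ≤ N, (p m).natDegree ≤ N) :
    ∃ Q : ℝ[X], Q.natDegree ≤ N ∧ ∀ y, HasSum (fun n => b n * (p (G n)).eval y) (Q.eval y) := by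
  set c : ℕ → ℝ := fun m => ∑' n, {n | G n = m}.indicator b n
  refine ⟨∑ m ∈ Finset.range (N + 1), Polynomial.C (c m) * p m, ?_, fun y => ?_⟩
  · refine natDegree_sum_le_of_forall_le _ _ fun m hm => natDegree_C_mul_le _ _ |>.trans ?_
    exact hp m (Finset.mem_range_succ_iff.mp hm)
  have hsplit : (fun n => b n * (p (G n)).eval y) =
      fun n => ∑ m ∈ Finset.range (N + 1), {n | G n = m}.indicator b n * (p m).eval y := by
    funext n
    rw [Finset.sum_eq_single_of_mem (G n) (Finset.mem_range_succ_iff.mpr (hG n))]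
    · simp
    · intro m _ hm
      simp [Set.indicator_of_notMem (show n ∉ {n | G n = m} from Ne.symm hm)]
  rw [hsplit, eval_finsetSum]
  refine hasSum_sum fun m _ => ?_
  simpa only [eval_mul, eval_C] using ((hb.indicator _).hasSum.mul_right ((p m).eval y))

theorem norm_le_tsum_of_hasSum_of_eq_zero {E : Type*} [NormedAddCommGroup E] {e : ℕ → E}
    {u : ℕ → ℝ} {s : E} {N : ℕ} (hs : HasSum e s) (hu : Summable u) (hzero : ∀ n < N, e n = 0)
    (hle : ∀ n, ‖e n‖ ≤ u n) : ‖s‖ ≤ ∑' n, u (N + n) := by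
  have htail : HasSum (fun n => e (n + N)) s := by
    rw [← hasSum_nat_add_iff' N] at hs
    rwa [Finset.sum_eq_zero fun n hn => hzero n (Finset.mem_range.mp hn), sub_zero] at hs
  simp_rw [add_comm N]
  exact htail.norm_le_of_bounded ((summable_nat_add_iff N).mpr hu).hasSum fun n => hle _

/-- Interpolation error of Chebyshev interpolation at the Gauss–Lobatto nodes:
if `f(x) = a₀/2 + Σ_{n=1}^∞ aₙ Tₙ(x)` with `Σ |aₙ| < ∞`, and `C` is the (unique) polynomial
of degree at most `N` with `C(xₖ) = f(xₖ)` at the Gauss–Lobatto nodes `xₖ = -cos(kπ/N)`,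
`k = 0, …, N`, then `|f(x) - C(x)| ≤ 2 Σ_{n=N}^∞ |aₙ|` for all `x ∈ [-1,1]`. -/
theorem chebyshev_interpolation_error
    (a : ℕ → ℝ) (ha : Summable fun n : ℕ => |a n|)
    (f : ℝ → ℝ)
    (hf : ∀ x ∈ Set.Icc (-1 : ℝ) 1,
      HasSum (fun n : ℕ => a (n + 1) * (Chebyshev.T ℝ (n + 1)).eval x) (f x - a 0 / 2))
    (N : ℕ) (hN : 1 ≤ N)
    (C : Polynomial ℝ) (hdeg : C.natDegree ≤ N)
    (hC : ∀ k : ℕ, k ≤ N →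
      C.eval (-Real.cos (k * Real.pi / N)) = f (-Real.cos (k * Real.pi / N))) :
    ∀ x ∈ Set.Icc (-1 : ℝ) 1, |f x - C.eval x| ≤ 2 * ∑' n : ℕ, |a (N + n)| := by
  set b : ℕ → ℝ := fun m => if m = 0 then a 0 / 2 else a m
  have hb_le : ∀ m, |b m| ≤ |a m| := fun m => by
    rcases eq_or_ne m 0 with rfl | hm
    · simp [b, abs_div]
    · simp [b, hm]
  have hseries : ∀ x ∈ Set.Icc (-1 : ℝ) 1, HasSum (fun m => b m * (T ℝ m).eval x) (f x) :=
    fun x hx => (hasSum_nat_add_iff' 1).mp (by simpa [b] using hf x hx)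
  obtain ⟨Q, hQdeg, hQ⟩ := exists_natDegree_le_hasSum_mul_eval
    (ha.of_norm_bounded hb_le) (aliasIndex_le N) (fun m => T ℝ m)
    fun m hm => by rwa [natDegree_T, Int.natAbs_natCast]
  have hCQ : C = Q := by
    refine eq_of_natDegree_le_of_eval_node_eq hdeg hQdeg fun i hi => ?_
    have hC_node : C.eval (node N i) = f (node N i) := by
      rw [← neg_node_sub (by omega) hi]
      exact hC (N - i) (N.sub_le i)
    refine hC_node.trans ((hseries _ node_mem_Icc).unique ?_)
    simpa only [eval_T_node_aliasIndex] using hQ (node N i)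
  intro x hx
  have herr : HasSum (fun m => b m * ((T ℝ m).eval x - (T ℝ (aliasIndex N m)).eval x))
      (f x - C.eval x) := by
    simpa only [mul_sub, hCQ] using (hseries x hx).sub (hQ x)
  rw [← tsum_mul_left]
  refine norm_le_tsum_of_hasSum_of_eq_zero herr (ha.mul_left 2) (fun m hm => ?_) fun m => ?_
  · simp [aliasIndex_of_le hm.le]
  · rw [Real.norm_eq_abs, abs_mul, mul_comm 2]
    exact mul_le_mul (hb_le m) (abs_eval_T_sub_eval_T_le_two (abs_le.mpr hx) _ _) (abs_nonneg _)
      (abs_nonneg _)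
end

section
/- Fix n ≥ 1. Let (a_m)_{m≥0} be a real sequence with Σ_{m=0}^{∞} |a_m| < ∞ and let f : [−1,1] → ℝ satisfy f(x) = a_0/2 + Σ_{m=1}^{∞} a_m T_m(x) for all x ∈ [−1,1]. Define the aliased coefficients b_k = a_k + Σ_{j=1}^{∞} (a_{k+2jn} + a_{2jn−k}) for 0 ≤ k ≤ n. Then at every Gauss–Lobatto node x_i = −cos(iπ/n), i ∈ {0,…,n}, one has f(x_i) = b_0/2 + Σ_{k=1}^{n−1} b_k T_k(x_i) + (b_n/2) T_n(x_i); that is, the coefficients of the Chebyshev interpolation polynomial differ from the exact Chebyshev coefficients exactly by the aliasing error. -/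
/-!
At the node `x = cos φ` with `φ = π - iπ/n` we have `Tₘ(x) = cos (mφ)`, and since `nφ ∈ πℤ` the
sequence `m ↦ cos (mφ)` is `2n`-periodic and invariant under `m ↦ 2n - m`. Splitting
`Σ aₘ cos (mφ)` into residue classes modulo `2n` and pairing the classes of `k` and `2n - k`
collects exactly the aliased coefficients `b_k`; the classes `0` and `n` are their own partners,
whence the halved end coefficients.
-/

open Polynomial Chebyshev Real

theorem Finset.sum_range_two_mul_eq_add_sum_Icc_add {M : Type*} [AddCommMonoid M]
    {n : ℕ} (hn : 1 ≤ n) (h : ℕ → M) :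
    ∑ r ∈ range (2 * n), h r = h 0 + ∑ k ∈ Icc 1 (n - 1), (h k + h (2 * n - k)) + h n := by
  obtain ⟨m, rfl⟩ : ∃ m, n = m + 1 := ⟨n - 1, by omega⟩
  have hupper : ∑ r ∈ Ico (m + 2) (2 * (m + 1)), h r = ∑ k ∈ Icc 1 m, h (2 * (m + 1) - k) := by
    refine sum_nbij' (fun r => 2 * (m + 1) - r) (fun k => 2 * (m + 1) - k) ?_ ?_ ?_ ?_ ?_ <;>
      intro r hr <;> simp only [mem_Ico, mem_Icc] at hr ⊢ <;> first | omega | (congr 1; omega)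
  rw [sum_add_distrib, Nat.add_sub_cancel, ← hupper, range_eq_Ico,
    ← sum_Ico_consecutive h (by omega : 0 ≤ m + 2) (by omega), sum_Ico_succ_top (by omega),
    sum_eq_sum_Ico_succ_bot (by omega), zero_add, Ico_add_one_right_eq_Icc]
  abel

section ResidueClasses

variable {R : Type*} [AddCommGroup R] [UniformSpace R] [IsUniformAddGroup R] [CompleteSpace R]
  {g : ℕ → R} {p : ℕ}

theorem Summable.comp_add_mul (hg : Summable g) (hp : p ≠ 0) (r : ℕ) :
    Summable fun j => g (r + p * j) :=
  hg.comp_injective fun _ _ h => Nat.eq_of_mul_eq_mul_left (by omega) (Nat.add_left_cancel h)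

theorem tsum_eq_sum_range_tsum_add_mul [T0Space R] (hg : Summable g) (hp : p ≠ 0) :
    ∑' m, g m = ∑ r ∈ Finset.range p, ∑' j, g (r + p * j) := by
  have : NeZero p := ⟨hp⟩
  rw [Nat.sumByResidueClasses hg p]
  refine Finset.sum_nbij' ZMod.val (fun r => (r : ZMod p)) ?_ ?_ ?_ ?_ ?_ <;> intro r hr
  · simpa using ZMod.val_lt r
  · simp
  · simp
  · rw [Finset.mem_range] at hr
    simp [ZMod.val_cast_of_lt hr]
  · rfl

end ResidueClasses

theorem aliased_coeff_mul_eq_tsum_add_tsum {a c : ℕ → ℝ} {n k : ℕ} (hn : n ≠ 0)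
    (hac : Summable fun m => a m * c m) (hper : c.Periodic (2 * n))
    (hsym : ∀ k ≤ 2 * n, c (2 * n - k) = c k) (hk : k ≤ 2 * n) :
    (a k + ∑' j, (a (k + 2 * (j + 1) * n) + a (2 * (j + 1) * n - k))) * c k =
      ∑' j, a (k + 2 * n * j) * c (k + 2 * n * j) +
        ∑' j, a (2 * n - k + 2 * n * j) * c (2 * n - k + 2 * n * j) := by
  have hshift (r j : ℕ) : c (r + 2 * n * j) = c r := by
    simpa [mul_comm] using hper.nat_mul j r
  have hsucc (j : ℕ) : k + 2 * (j + 1) * n = k + 2 * n * (j + 1) := by ring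
  have hsub (j : ℕ) : 2 * (j + 1) * n - k = 2 * n - k + 2 * n * j := by
    have : 2 * (j + 1) * n = 2 * n + 2 * n * j := by ring
    omega
  have hclass := hac.comp_add_mul (by omega : 2 * n ≠ 0)
  calc (a k + ∑' j, (a (k + 2 * (j + 1) * n) + a (2 * (j + 1) * n - k))) * c k
      = a k * c k + ∑' j, (a (k + 2 * n * (j + 1)) * c (k + 2 * n * (j + 1)) +
          a (2 * n - k + 2 * n * j) * c (2 * n - k + 2 * n * j)) := by
        simp only [add_mul, ← tsum_mul_right, hsucc, hsub, hshift, hsym k hk]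
    _ = _ := by
        rw [((summable_nat_add_iff 1).2 (hclass k)).tsum_add (hclass _),
          (hclass k).tsum_eq_zero_add]
        simp only [mul_zero, add_zero, add_assoc]

theorem periodic_cos_nat_mul {φ : ℝ} {n : ℕ} {ℓ : ℤ} (h : n * φ = ℓ * π) :
    (fun m : ℕ => cos (m * φ)).Periodic (2 * n) := by
  intro m
  dsimp only
  rw [show ((m + 2 * n : ℕ) : ℝ) * φ = m * φ + ℓ * (2 * π) by push_cast; linear_combination 2 * h]
  exact cos_add_int_mul_two_pi _ _

theorem cos_two_mul_sub_nat_mul {φ : ℝ} {n k : ℕ} {ℓ : ℤ} (h : n * φ = ℓ * π) (hk : k ≤ 2 * n) :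
    cos ((2 * n - k : ℕ) * φ) = cos (k * φ) := by
  rw [show ((2 * n - k : ℕ) : ℝ) * φ = -(k * φ) + ℓ * (2 * π) by
    push_cast [Nat.cast_sub hk]; linear_combination 2 * h]
  rw [cos_add_int_mul_two_pi, cos_neg]

theorem HasSum.add_half_eq_aliased_sum {a b c : ℕ → ℝ} {n : ℕ} {s : ℝ} (hn : 1 ≤ n)
    (hs : HasSum (fun m => a (m + 1) * c (m + 1)) s) (hper : c.Periodic (2 * n))
    (hsym : ∀ k ≤ 2 * n, c (2 * n - k) = c k) (hc0 : c 0 = 1)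
    (hb : ∀ k ≤ n, b k = a k + ∑' j, (a (k + 2 * (j + 1) * n) + a (2 * (j + 1) * n - k))) :
    s + a 0 / 2 = b 0 / 2 + ∑ k ∈ Finset.Icc 1 (n - 1), b k * c k + b n / 2 * c n := by
  have hsum : HasSum (fun m => a m * c m) (s + a 0) := by
    simpa [hc0] using (hasSum_nat_add_iff (f := fun m => a m * c m) 1).1 hs
  set G : ℕ → ℝ := fun r => ∑' j, a (r + 2 * n * j) * c (r + 2 * n * j)
  have halias (k : ℕ) (hk : k ≤ n) : b k * c k = G k + G (2 * n - k) :=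
    hb k hk ▸ aliased_coeff_mul_eq_tsum_add_tsum (by omega) hsum.summable hper hsym (by omega)
  have hG : G (2 * n) = G 0 - a 0 := by
    have h := (hsum.summable.comp_add_mul (by omega : 2 * n ≠ 0) 0).tsum_eq_zero_add
    simp only [G, h, mul_zero, add_zero, hc0, mul_one, add_sub_cancel_left, mul_add]
    congr! 3 with j <;> ring_nf
  have hfold := tsum_eq_sum_range_tsum_add_mul hsum.summable (p := 2 * n) (by omega)
  rw [Finset.sum_range_two_mul_eq_add_sum_Icc_add hn, hsum.tsum_eq] at hfold
  have hmid : ∑ k ∈ Finset.Icc 1 (n - 1), b k * c k =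
      ∑ k ∈ Finset.Icc 1 (n - 1), (G k + G (2 * n - k)) :=
    Finset.sum_congr rfl fun k hk => halias k (by simp at hk; omega)
  have hb0 := halias 0 (by omega)
  have hbn := halias n le_rfl
  rw [hc0, mul_one, Nat.sub_zero] at hb0
  rw [show 2 * n - n = n by omega] at hbn
  rw [hmid]
  linarith

theorem chebyshev_interpolation_aliased_coefficients_general
    (n : ℕ) (hn : 1 ≤ n)
    (a : ℕ → ℝ)
    (f : ℝ → ℝ)
    (hf : ∀ x ∈ Set.Icc (-1 : ℝ) 1,
      HasSum (fun m : ℕ => a (m + 1) * (Chebyshev.T ℝ (m + 1)).eval x) (f x - a 0 / 2))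
    (b : ℕ → ℝ)
    (hb : ∀ k : ℕ, k ≤ n →
      b k = a k + ∑' j : ℕ, (a (k + 2 * (j + 1) * n) + a (2 * (j + 1) * n - k)))
    (i : ℕ) :
    f (-Real.cos (i * Real.pi / n))
      = b 0 / 2
        + (∑ k ∈ Finset.Icc 1 (n - 1),
            b k * (Chebyshev.T ℝ k).eval (-Real.cos (i * Real.pi / n)))
        + b n / 2 * (Chebyshev.T ℝ n).eval (-Real.cos (i * Real.pi / n)) := by
  have hx : -cos (i * π / n) = cos (π - i * π / n) := (cos_pi_sub _).symm
  have hnφ : (n : ℝ) * (π - i * π / n) = ((n - i : ℤ) : ℝ) * π := by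
    have : (n : ℝ) ≠ 0 := by positivity
    push_cast; field_simp
  set φ := π - i * π / n
  have hT (m : ℕ) : (T ℝ m).eval (cos φ) = cos (m * φ) := by simp [T_real_cos]
  have hseries : HasSum (fun m => a (m + 1) * cos ((m + 1 : ℕ) * φ)) (f (cos φ) - a 0 / 2) := by
    simpa [T_real_cos] using hf (cos φ) ⟨neg_one_le_cos φ, cos_le_one φ⟩
  have halias := hseries.add_half_eq_aliased_sum (c := fun m => cos (m * φ)) hn
    (periodic_cos_nat_mul hnφ) (fun k hk => cos_two_mul_sub_nat_mul hnφ hk) (by simp) hb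
  simp only [hx, hT]
  linarith

/-- The coefficients of the Chebyshev interpolation polynomial differ from the exact
Chebyshev coefficients exactly by the aliasing error: if `f(x) = a₀/2 + Σ_{m=1}^∞ aₘ Tₘ(x)`
with `Σ |aₘ| < ∞`, and `b_k = a_k + Σ_{j=1}^∞ (a_{k+2jn} + a_{2jn-k})` for `0 ≤ k ≤ n`, then
at every Gauss–Lobatto node `xᵢ = -cos(iπ/n)` one has
`f(xᵢ) = b₀/2 + Σ_{k=1}^{n-1} b_k T_k(xᵢ) + (b_n/2) T_n(xᵢ)`. -/
theorem chebyshev_interpolation_aliased_coefficients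
    (n : ℕ) (hn : 1 ≤ n)
    (a : ℕ → ℝ) (ha : Summable fun m : ℕ => |a m|)
    (f : ℝ → ℝ)
    (hf : ∀ x ∈ Set.Icc (-1 : ℝ) 1,
      HasSum (fun m : ℕ => a (m + 1) * (Chebyshev.T ℝ (m + 1)).eval x) (f x - a 0 / 2))
    (b : ℕ → ℝ)
    (hb : ∀ k : ℕ, k ≤ n →
      b k = a k + ∑' j : ℕ, (a (k + 2 * (j + 1) * n) + a (2 * (j + 1) * n - k)))
    (i : ℕ) (hi : i ≤ n) :
    f (-Real.cos (i * Real.pi / n))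
      = b 0 / 2
        + (∑ k ∈ Finset.Icc 1 (n - 1),
            b k * (Chebyshev.T ℝ k).eval (-Real.cos (i * Real.pi / n)))
        + b n / 2 * (Chebyshev.T ℝ n).eval (-Real.cos (i * Real.pi / n)) :=
  chebyshev_interpolation_aliased_coefficients_general n hn a f hf b hb i
end
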